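/- Let X, Y ⊆ (−∞, 0) be uniformly discrete sets with X ≠ Y. Then the function f(w) = ∑_{x∈X} 1/(x−w)² − ∑_{y∈Y} 1/(y−w)² is analytic and bounded on the open right half plane {Re w > 0} but is not identically zero there. -/

import Mathlib

/-!
Uniform discreteness makes `∑ 1 / x²` converge and leaves only finitely many points of `X` or `Y`
in any disc, so both series converge locally uniformly on `ℂ`; they are therefore holomorphic off
`X ∪ Y`, and for `Re w > 0` each term is bounded by `1 / x²`. If `f` vanished on the right half
plane, the identity theorem on the slit plane `ℂ \ (-∞, 0]` would make it vanish on the upper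
half plane. But at a point `a` of `X \ Y` (or `Y \ X`) `f` has a double pole:
`(w - a)² f(w) → 1` as `w → a`, while this product is `0` for `w` approaching `a` from above.
-/

open Set Filter Topology Complex

def UniformlyDiscrete (c : ℝ) (S : Set ℝ) : Prop :=
  S.Pairwise fun x y => c ≤ |x - y|

noncomputable def coulombField (S : Set ℝ) (w : ℂ) : ℂ :=
  ∑' x : S, 1 / (((x : ℝ) : ℂ) - w) ^ 2

lemma one_div_sq_le_four_div_floor_sq {q : ℝ} (hq : 1 < |q|) :
    1 / q ^ 2 ≤ 4 / (⌊q⌋ : ℝ) ^ 2 := by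
  have h₁ := Int.floor_le q
  have h₂ := Int.lt_floor_add_one q
  have hn : 0 < |(⌊q⌋ : ℝ)| :=
    abs_pos.mpr fun h => by rcases lt_abs.mp hq with hq | hq <;> linarith
  have hle : |(⌊q⌋ : ℝ)| ≤ 2 * |q| := by
    rw [abs_le]; constructor <;> cases abs_cases q <;> linarith
  calc 1 / q ^ 2 = 4 / (2 * |q|) ^ 2 := by rw [mul_pow, sq_abs]; field_simp; norm_num
    _ ≤ 4 / |(⌊q⌋ : ℝ)| ^ 2 := by gcongr
    _ = 4 / (⌊q⌋ : ℝ) ^ 2 := by rw [sq_abs]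

lemma norm_one_div_sq_le {z : ℂ} {ρ : ℝ} (hρ : 0 < ρ) (h : ρ ≤ ‖z‖) :
    ‖1 / z ^ 2‖ ≤ 1 / ρ ^ 2 := by
  rw [norm_div, norm_one, norm_pow]
  gcongr

lemma norm_one_div_ofReal_sub_sq_le_of_two_mul_norm_lt {x : ℝ} {w : ℂ} (h : 2 * ‖w‖ < |x|) :
    ‖1 / ((x : ℂ) - w) ^ 2‖ ≤ 4 / x ^ 2 := by
  have hx : 0 < |x| / 2 := by linarith [norm_nonneg w]
  have hdist : |x| / 2 ≤ ‖(x : ℂ) - w‖ := by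
    have := norm_sub_norm_le (x : ℂ) w
    rw [norm_real, Real.norm_eq_abs] at this
    linarith
  calc ‖1 / ((x : ℂ) - w) ^ 2‖ ≤ 1 / (|x| / 2) ^ 2 := norm_one_div_sq_le hx hdist
    _ = 4 / x ^ 2 := by rw [div_pow, sq_abs]; ring

lemma norm_one_div_ofReal_sub_sq_le_of_neg {x : ℝ} {w : ℂ} (hx : x < 0) (hw : 0 ≤ w.re) :
    ‖1 / ((x : ℂ) - w) ^ 2‖ ≤ 1 / x ^ 2 := by
  have hdist : -x ≤ ‖(x : ℂ) - w‖ := by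
    have := abs_re_le_norm ((x : ℂ) - w)
    rw [sub_re, ofReal_re] at this
    linarith [neg_abs_le (x - w.re)]
  simpa using norm_one_div_sq_le (neg_pos.mpr hx) hdist

namespace UniformlyDiscrete

variable {S : Set ℝ} {c : ℝ}

lemma mono {T : Set ℝ} (hS : UniformlyDiscrete c S) (hT : T ⊆ S) : UniformlyDiscrete c T :=
  Set.Pairwise.mono hT hS

lemma injOn_floor_div (hS : UniformlyDiscrete c S) (hc : 0 < c) :
    S.InjOn fun x => ⌊x / c⌋ := by
  intro x hx y hy hxy
  by_contra hne
  have h := Int.abs_sub_lt_one_of_floor_eq_floor hxy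
  rw [← sub_div, abs_div, abs_of_pos hc, div_lt_one hc] at h
  exact (hS hx hy hne).not_gt h

lemma eventually_cofinite_lt_abs (hS : UniformlyDiscrete c S) (hc : 0 < c) (R : ℝ) :
    ∀ᶠ x : S in cofinite, R < |(x : ℝ)| := by
  rw [eventually_cofinite]
  refine Finite.of_finite_image ((finite_Icc ⌊-R / c⌋ ⌊R / c⌋).subset ?_)
    ((hS.injOn_floor_div hc).injective.injOn (f := S.domRestrict fun x => ⌊x / c⌋))
  rintro _ ⟨x, hx, rfl⟩
  obtain ⟨h₁, h₂⟩ := abs_le.mp (not_lt.mp hx)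
  exact ⟨Int.floor_le_floor (by gcongr), Int.floor_le_floor (by gcongr)⟩

lemma summable_one_div_sq (hS : UniformlyDiscrete c S) (hc : 0 < c) :
    Summable fun x : S => 1 / (x : ℝ) ^ 2 := by
  have hZ : Summable fun n : ℤ => 4 / c ^ 2 * (1 / (n : ℝ) ^ 2) :=
    (Real.summable_one_div_int_pow.mpr one_lt_two).mul_left _
  refine .of_norm_bounded_eventually (hZ.comp_injective (hS.injOn_floor_div hc).injective) ?_
  filter_upwards [hS.eventually_cofinite_lt_abs hc c] with x hx
  have hq : 1 < |(x : ℝ) / c| := by rwa [abs_div, abs_of_pos hc, one_lt_div hc]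
  rw [Real.norm_eq_abs, abs_of_nonneg (by positivity)]
  calc 1 / (x : ℝ) ^ 2 = 1 / c ^ 2 * (1 / ((x : ℝ) / c) ^ 2) := by field_simp
    _ ≤ 1 / c ^ 2 * (4 / (⌊(x : ℝ) / c⌋ : ℝ) ^ 2) := by
        gcongr ?_ * ?_
        · exact one_div_sq_le_four_div_floor_sq hq
    _ = _ := by simp only [Function.comp_apply, domRestrict_apply]; ring

lemma summable_one_div_sub_sq (hS : UniformlyDiscrete c S) (hc : 0 < c) (w : ℂ) :
    Summable fun x : S => 1 / (((x : ℝ) : ℂ) - w) ^ 2 := by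
  refine .of_norm_bounded_eventually ((hS.summable_one_div_sq hc).mul_left 4) ?_
  filter_upwards [hS.eventually_cofinite_lt_abs hc (2 * ‖w‖)] with x hx
  rw [mul_one_div]
  exact norm_one_div_ofReal_sub_sq_le_of_two_mul_norm_lt hx

lemma tendstoLocallyUniformly_coulombField (hS : UniformlyDiscrete c S) (hc : 0 < c) :
    TendstoLocallyUniformly (fun (t : Finset S) w => ∑ x ∈ t, 1 / (((x : ℝ) : ℂ) - w) ^ 2)
      (coulombField S) atTop := by
  rw [tendstoLocallyUniformly_iff_forall_isCompact]
  intro K hK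
  obtain ⟨R, hR⟩ := hK.isBounded.subset_closedBall 0
  refine tendstoUniformlyOn_tsum_of_cofinite_eventually
    ((hS.summable_one_div_sq hc).mul_left 4) ?_
  filter_upwards [hS.eventually_cofinite_lt_abs hc (2 * R)] with x hx w hw
  have : ‖w‖ ≤ R := by simpa using hR hw
  rw [mul_one_div]
  exact norm_one_div_ofReal_sub_sq_le_of_two_mul_norm_lt (by linarith)

lemma differentiableOn_coulombField (hS : UniformlyDiscrete c S) (hc : 0 < c) {U : Set ℂ}
    (hU : IsOpen U) (hSU : ∀ x ∈ S, (x : ℂ) ∉ U) :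
    DifferentiableOn ℂ (coulombField S) U := by
  refine (hS.tendstoLocallyUniformly_coulombField hc).tendstoLocallyUniformlyOn.differentiableOn
    (.of_forall fun t => ?_) hU
  refine DifferentiableOn.fun_sum fun x _ => ?_
  refine (differentiableOn_const 1).div (by fun_prop) fun w hw => ?_
  exact pow_ne_zero 2 (sub_ne_zero.mpr fun h => hSU x x.2 (h ▸ hw))

lemma continuousAt_coulombField (hS : UniformlyDiscrete c S) (hc : 0 < c) {w₀ : ℂ}
    (hw₀ : ∀ x ∈ S, (x : ℂ) ≠ w₀) : ContinuousAt (coulombField S) w₀ := by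
  refine continuousAt_of_locally_uniform_approx_of_continuousAt fun u hu => ?_
  obtain ⟨t, ht, hFt⟩ := hS.tendstoLocallyUniformly_coulombField hc u hu w₀
  obtain ⟨s, hs⟩ := hFt.exists
  refine ⟨t, ht, _, ?_, hs⟩
  refine tendsto_finsetSum s fun x _ => continuousAt_const.div (by fun_prop) ?_
  exact pow_ne_zero 2 (sub_ne_zero.mpr (hw₀ x x.2))

lemma coulombField_eq_add (hS : UniformlyDiscrete c S) (hc : 0 < c) {a : ℝ} (ha : a ∈ S)
    (w : ℂ) : coulombField S w = 1 / ((a : ℂ) - w) ^ 2 + coulombField (S \ {a}) w := by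
  have h := Summable.tsum_union_disjoint (f := fun x : ℝ => 1 / ((x : ℂ) - w) ^ 2)
    disjoint_sdiff_right ((finite_singleton a).summable _)
    ((hS.mono sdiff_subset).summable_one_div_sub_sq hc w)
  rw [union_sdiff_cancel (singleton_subset_iff.mpr ha)] at h
  simpa only [coulombField, tsum_singleton a fun x : ℝ => 1 / ((x : ℂ) - w) ^ 2] using h

lemma norm_coulombField_le (hS : UniformlyDiscrete c S) (hc : 0 < c) (hneg : S ⊆ Iio 0)
    {w : ℂ} (hw : 0 ≤ w.re) : ‖coulombField S w‖ ≤ ∑' x : S, 1 / (x : ℝ) ^ 2 :=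
  tsum_of_norm_bounded (hS.summable_one_div_sq hc).hasSum fun x =>
    norm_one_div_ofReal_sub_sq_le_of_neg (hneg x.2) hw

lemma differentiableOn_slitPlane (hS : UniformlyDiscrete c S) (hc : 0 < c) (hneg : S ⊆ Iio 0) :
    DifferentiableOn ℂ (coulombField S) slitPlane :=
  hS.differentiableOn_coulombField hc isOpen_slitPlane fun x hx => by
    simpa [ofReal_mem_slitPlane] using (hneg hx).le

end UniformlyDiscrete

lemma tendsto_sq_mul_coulombField_sub {X Y : Set ℝ} {cX cY : ℝ}
    (hX : UniformlyDiscrete cX X) (hcX : 0 < cX) (hY : UniformlyDiscrete cY Y) (hcY : 0 < cY)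
    {a : ℝ} (haX : a ∈ X) (haY : a ∉ Y) :
    Tendsto (fun w => (w - a) ^ 2 * (coulombField X w - coulombField Y w)) (𝓝[≠] (a : ℂ))
      (𝓝 1) := by
  have hcont : ContinuousAt
      (fun w => 1 + (w - a) ^ 2 * (coulombField (X \ {a}) w - coulombField Y w)) a := by
    refine continuousAt_const.add ((by fun_prop : ContinuousAt (fun w : ℂ => (w - a) ^ 2) a).mul
      ((UniformlyDiscrete.continuousAt_coulombField (hX.mono sdiff_subset) hcX ?_).sub
        (hY.continuousAt_coulombField hcY ?_)))
    · exact fun x hx => ofReal_injective.ne hx.2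
    · exact fun x hx => ofReal_injective.ne fun h => haY (h ▸ hx)
  have hlim : Tendsto (fun w => 1 + (w - a) ^ 2 * (coulombField (X \ {a}) w - coulombField Y w))
      (𝓝[≠] (a : ℂ)) (𝓝 1) := by
    simpa using hcont.tendsto.mono_left nhdsWithin_le_nhds
  refine hlim.congr' (eventually_nhdsWithin_of_forall fun w (hw : w ≠ a) => ?_)
  have : (a : ℂ) - w ≠ 0 := sub_ne_zero.mpr (Ne.symm hw)
  dsimp only
  rw [hX.coulombField_eq_add hcX haX]
  field_simp
  ring

lemma eqOn_zero_slitPlane_of_re_pos {F : ℂ → ℂ} (hF : DifferentiableOn ℂ F slitPlane)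
    (h₀ : ∀ w : ℂ, 0 < w.re → F w = 0) : EqOn F 0 slitPlane :=
  (hF.analyticOnNhd isOpen_slitPlane).eqOn_zero_of_preconnected_of_eventuallyEq_zero
    (starConvex_one_slitPlane.isPathConnected one_mem_slitPlane).isConnected.isPreconnected
    one_mem_slitPlane
    (((isOpen_lt continuous_const continuous_re).eventually_mem (by simp)).mono h₀)

lemma coulombField_sub_ne_zero {X Y : Set ℝ} {cX cY : ℝ}
    (hX : UniformlyDiscrete cX X) (hcX : 0 < cX) (hXneg : X ⊆ Iio 0)
    (hY : UniformlyDiscrete cY Y) (hcY : 0 < cY) (hYneg : Y ⊆ Iio 0)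
    {a : ℝ} (haX : a ∈ X) (haY : a ∉ Y) :
    ¬ ∀ w : ℂ, 0 < w.re → coulombField X w - coulombField Y w = 0 := by
  intro h₀
  have hzero := eqOn_zero_slitPlane_of_re_pos
    ((hX.differentiableOn_slitPlane hcX hXneg).sub (hY.differentiableOn_slitPlane hcY hYneg)) h₀
  have hH : {w : ℂ | 0 < w.im} ⊆ {(a : ℂ)}ᶜ := fun w hw h => by simp_all
  have : (𝓝[{w : ℂ | 0 < w.im}] (a : ℂ)).NeBot :=
    mem_closure_iff_nhdsWithin_neBot.mp (by simp)
  have hone := (tendsto_sq_mul_coulombField_sub hX hcX hY hcY haX haY).mono_left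
    (nhdsWithin_mono _ hH)
  have hzero' : Tendsto (fun w => (w - a) ^ 2 * (coulombField X w - coulombField Y w))
      (𝓝[{w : ℂ | 0 < w.im}] (a : ℂ)) (𝓝 0) :=
    tendsto_const_nhds.congr' <| eventually_nhdsWithin_of_forall fun w (hw : 0 < w.im) => by
      have h := hzero (mem_slitPlane_iff.mpr (.inr hw.ne'))
      simp only [Pi.sub_apply, Pi.zero_apply] at h
      simp [h]
  exact one_ne_zero (tendsto_nhds_unique hone hzero')

/-- For distinct uniformly discrete sets `X, Y ⊆ (-∞, 0)`, the difference of their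
Coulomb force fields is analytic and bounded on the open right half plane, but not
identically zero there. -/
theorem stmt_18 (X Y : Set ℝ)
    (hXneg : X ⊆ Set.Iio 0) (hYneg : Y ⊆ Set.Iio 0)
    (cX : ℝ) (hcX : 0 < cX) (hdiscX : ∀ x ∈ X, ∀ y ∈ X, x ≠ y → cX ≤ |x - y|)
    (cY : ℝ) (hcY : 0 < cY) (hdiscY : ∀ x ∈ Y, ∀ y ∈ Y, x ≠ y → cY ≤ |x - y|)
    (hne : X ≠ Y)
    (f : ℂ → ℂ)
    (hf : ∀ w : ℂ, f w =
      (∑' x : X, 1 / (((x : ℝ) : ℂ) - w) ^ 2) - ∑' y : Y, 1 / (((y : ℝ) : ℂ) - w) ^ 2) :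
    DifferentiableOn ℂ f {w : ℂ | 0 < w.re} ∧
      (∃ M : ℝ, ∀ w : ℂ, 0 < w.re → ‖f w‖ ≤ M) ∧
      ¬ (∀ w : ℂ, 0 < w.re → f w = 0) := by
  have hX : UniformlyDiscrete cX X := hdiscX
  have hY : UniformlyDiscrete cY Y := hdiscY
  obtain rfl : f = fun w => coulombField X w - coulombField Y w := funext hf
  refine ⟨?_, ⟨_, fun w hw => (norm_sub_le _ _).trans (add_le_add
    (hX.norm_coulombField_le hcX hXneg hw.le) (hY.norm_coulombField_le hcY hYneg hw.le))⟩, ?_⟩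
  · exact ((hX.differentiableOn_slitPlane hcX hXneg).sub
      (hY.differentiableOn_slitPlane hcY hYneg)).mono fun w hw => mem_slitPlane_iff.mpr (.inl hw)
  · obtain ⟨a, ⟨haX, haY⟩ | ⟨haY, haX⟩⟩ := Set.symmDiff_nonempty.mpr hne
    · exact coulombField_sub_ne_zero hX hcX hXneg hY hcY hYneg haX haY
    · refine fun h₀ => coulombField_sub_ne_zero hY hcY hYneg hX hcX hXneg haY haX fun w hw => ?_
      rw [← neg_sub]
      exact neg_eq_zero.mpr (h₀ w hw)
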